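/- arXiv:2205.09668 — 3 statements merged into one kernel-verified Lean document; each statement's English description precedes it below -/
import Mathlib

section
/- Let V be a finite set and let F be a family of subsets of V. Consider the simple graph on F in which two sets are adjacent if and only if their symmetric difference has exactly one element. If this graph is isomorphic to the hypercube Q_t for some integer t ≥ 0, then there exist sets S ⊆ T ⊆ V with |T \ S| = t such that F is exactly the interval {R : S ⊆ R ⊆ T} in the poset of subsets of V ordered by inclusion. -/
/-- The TAR (token addition/removal) graph of a predicate `P` on finite subsets of `V`:
vertices are the `P`-sets, two `P`-sets being adjacent iff their symmetric difference
has exactly one element. -/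
def tarGraph {V : Type*} [DecidableEq V] (P : Finset V → Prop) :
    SimpleGraph {S : Finset V // P S} where
  Adj S T := (symmDiff S.1 T.1).card = 1
  symm := by constructor; intro S T h; rwa [symmDiff_comm]
  loopless := by constructor; intro S h; simp [symmDiff_self] at h

/-- `S` is a minimal `P`-set: `S` is a `P`-set and no proper subset of `S` is a `P`-set. -/
def IsMinimalPSet {V : Type*} (P : Finset V → Prop) (S : Finset V) : Prop :=
  P S ∧ ∀ T : Finset V, T ⊂ S → ¬ P T

/-- `R` is `P`-irrelevant: no minimal `P`-set contains any vertex of `R`. -/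
def IsIrrelevant {V : Type*} (P : Finset V → Prop) (R : Finset V) : Prop :=
  ∀ S : Finset V, IsMinimalPSet P S → ∀ v ∈ R, v ∉ S

/-- The hypercube `Q_t`: vertices are `{0,1}^t`, two tuples adjacent iff they differ
in exactly one coordinate. -/
def hypercube (t : ℕ) : SimpleGraph (Fin t → Bool) where
  Adj x y := ∃! i : Fin t, x i ≠ y i
  symm := by
    constructor
    rintro x y ⟨i, hi, hu⟩
    exact ⟨i, hi.symm, fun j hj => hu j hj.symm⟩
  loopless := by constructor; rintro x ⟨i, hi, -⟩; exact hi rfl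

/-!
Identify `{0,1}^t` with `Finset (Fin t)`; the isomorphism becomes an injective map `g` sending
`s` and `s ∆ {i}` to sets differing in a single element `e s i`. Around every
square `s, s ∆ {i}, s ∆ {j}, s ∆ {i, j}` the two labels of opposite edges agree (otherwise
injectivity fails), so `e s i = v i` is independent of `s`, `v` is injective, and
`g s = g ∅ ∆ v '' s`. The image of `g` is then the set of all `g ∅ ∆ B` with `B ⊆ range v`,
which is the interval `[g ∅ \ range v, g ∅ ∪ range v]`.
-/

open Function
open scoped symmDiff

namespace Finset

variable {α : Type*} [DecidableEq α]

theorem symmDiff_singleton_of_notMem {s : Finset α} {a : α} (h : a ∉ s) :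
    s ∆ {a} = insert a s := by
  rw [(disjoint_singleton_right.2 h).symmDiff_eq_sup, sup_eq_union, union_comm, ← insert_eq]

theorem symmDiff_subset_iff {s t u : Finset α} : s ∆ t ⊆ u ↔ s \ u ⊆ t ∧ t ⊆ s ∪ u := by
  simp only [subset_iff, mem_symmDiff, mem_sdiff, mem_union]
  grind

theorem union_sdiff_sdiff_self (s t : Finset α) : (s ∪ t) \ (s \ t) = t := by
  ext
  simp only [mem_sdiff, mem_union]
  tauto

end Finset

open Finset

section CubeEmbedding

variable {ι V : Type*} [DecidableEq ι] [DecidableEq V] {g : Finset ι → Finset V}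
  {e : Finset ι → ι → V}

theorem label_symmDiff_singleton (hg : Injective g)
    (he : ∀ s i, g (s ∆ {i}) = g s ∆ {e s i}) (s : Finset ι) (i j : ι) :
    e (s ∆ {j}) i = e s i := by
  obtain rfl | hij := eq_or_ne i j
  · have h := he (s ∆ {i}) i
    rw [symmDiff_symmDiff_cancel_right, he, symmDiff_assoc, eq_comm, symmDiff_eq_left,
      symmDiff_eq_bot, singleton_inj] at h
    exact h.symm
  have hsquare : g (s ∆ {i} ∆ {j}) = g s ∆ ({e s i} ∆ {e (s ∆ {i}) j}) := by
    rw [he, he, symmDiff_assoc]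
  have hsquare' : g (s ∆ {i} ∆ {j}) = g s ∆ ({e s j} ∆ {e (s ∆ {j}) i}) := by
    rw [symmDiff_right_comm, he, he, symmDiff_assoc]
  have hlabels := hsquare.symm.trans hsquare'
  rw [symmDiff_right_inj] at hlabels
  have hne : e s i ≠ e (s ∆ {i}) j := by
    intro h
    rw [h, symmDiff_self, symmDiff_bot] at hsquare
    have hloop := hg hsquare
    rw [symmDiff_assoc, symmDiff_eq_left, symmDiff_eq_bot, singleton_inj] at hloop
    exact hij hloop
  have hmem : e s i ∈ ({e s j} ∆ {e (s ∆ {j}) i} : Finset V) := by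
    rw [← hlabels, mem_symmDiff, mem_singleton, mem_singleton]
    exact Or.inl ⟨rfl, hne⟩
  rw [mem_symmDiff, mem_singleton, mem_singleton] at hmem
  rcases hmem with ⟨hsame, -⟩ | ⟨hopp, -⟩
  · have : g (s ∆ {i}) = g (s ∆ {j}) := by rw [he, he, hsame]
    exact absurd (singleton_inj.1 (symmDiff_right_inj.1 (hg this))) hij
  · exact hopp.symm

theorem label_eq_label_empty (hg : Injective g)
    (he : ∀ s i, g (s ∆ {i}) = g s ∆ {e s i}) (s : Finset ι) (i : ι) : e s i = e ∅ i := by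
  induction s using Finset.induction_on with
  | empty => rfl
  | insert a s ha ih =>
    rw [← symmDiff_singleton_of_notMem ha, label_symmDiff_singleton hg he, ih]

theorem exists_injective_eq_symmDiff_image (hg : Injective g)
    (hadj : ∀ s i, (g s ∆ g (s ∆ {i})).card = 1) :
    ∃ v : ι → V, Injective v ∧ ∀ s, g s = g ∅ ∆ s.image v := by
  choose e he using fun s i => card_eq_one.1 (hadj s i)
  replace he : ∀ s i, g (s ∆ {i}) = g s ∆ {e s i} := fun s i => by
    rw [← he, symmDiff_symmDiff_cancel_left]
  have hv : ∀ s i, g (s ∆ {i}) = g s ∆ {e ∅ i} := fun s i => by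
    rw [he, label_eq_label_empty hg he]
  have hinj : Injective (e ∅) := fun i j hij => by
    have : g (∅ ∆ {i}) = g (∅ ∆ {j}) := by rw [hv, hv, hij]
    exact singleton_inj.1 (symmDiff_right_inj.1 (hg this))
  refine ⟨e ∅, hinj, fun s => ?_⟩
  induction s using Finset.induction_on with
  | empty => exact (symmDiff_bot _).symm
  | insert a s ha ih =>
    rw [image_insert, ← symmDiff_singleton_of_notMem (hinj.mem_finset_image.not.2 ha),
      ← symmDiff_singleton_of_notMem ha, hv, ih, symmDiff_assoc]

end CubeEmbedding

theorem range_symmDiff_image {ι V : Type*} [Fintype ι] [DecidableEq V]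
    (A : Finset V) (v : ι → V) :
    Set.range (fun s : Finset ι => A ∆ s.image v) =
      {R | A \ univ.image v ⊆ R ∧ R ⊆ A ∪ univ.image v} := by
  ext R
  simp only [Set.mem_range, Set.mem_ofPred_eq, ← symmDiff_subset_iff, subset_image_iff,
    subset_univ, true_and]
  constructor
  · rintro ⟨s, rfl⟩
    exact ⟨s, (symmDiff_symmDiff_cancel_left _ _).symm⟩
  · rintro ⟨s, hs⟩
    exact ⟨s, by rw [hs, symmDiff_symmDiff_cancel_left]⟩

theorem bijective_decide_mem {ι : Type*} [Fintype ι] [DecidableEq ι] :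
    Bijective fun (s : Finset ι) (i : ι) => decide (i ∈ s) := by
  refine ⟨fun s s' h => ext fun i => by simpa using congrFun h i, fun x => ?_⟩
  exact ⟨univ.filter (x · = true), funext fun i => by simp⟩

theorem hypercube_adj_decide_mem_symmDiff_singleton {t : ℕ} (s : Finset (Fin t)) (i : Fin t) :
    (hypercube t).Adj (fun j => decide (j ∈ s)) (fun j => decide (j ∈ s ∆ {i})) := by
  refine ⟨i, by simp [mem_symmDiff], fun j hj => ?_⟩
  by_contra hji
  simp [mem_symmDiff, hji] at hj

theorem interval_of_iso_hypercube_general {V : Type*} [DecidableEq V]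
    (F : Set (Finset V)) (t : ℕ)
    (h : Nonempty (tarGraph (· ∈ F) ≃g hypercube t)) :
    ∃ S T : Finset V, S ⊆ T ∧ (T \ S).card = t ∧
      F = {R : Finset V | S ⊆ R ∧ R ⊆ T} := by
  obtain ⟨φ⟩ := h
  let χ : Finset (Fin t) → Fin t → Bool := fun s j => decide (j ∈ s)
  let g : Finset (Fin t) → Finset V := fun s => (φ.symm (χ s)).1
  have hg : Injective g := fun s s' h =>
    bijective_decide_mem.1 (φ.symm.injective (Subtype.ext h))
  have hadj : ∀ s i, (g s ∆ g (s ∆ {i})).card = 1 := fun s i =>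
    φ.symm.map_adj_iff.2 (hypercube_adj_decide_mem_symmDiff_singleton s i)
  obtain ⟨v, hv, hgv⟩ := exists_injective_eq_symmDiff_image hg hadj
  have hF : F = Set.range g := by
    refine Set.Subset.antisymm (fun S hS => ?_)
      (Set.range_subset_iff.2 fun s => (φ.symm (χ s)).2)
    obtain ⟨s, hs⟩ := bijective_decide_mem.2 (φ ⟨S, hS⟩)
    exact ⟨s, by simp only [g, χ, hs, RelIso.symm_apply_apply]⟩
  refine ⟨g ∅ \ univ.image v, g ∅ ∪ univ.image v, sdiff_subset.trans subset_union_left, ?_, ?_⟩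
  · rw [union_sdiff_sdiff_self, card_image_of_injective _ hv, card_univ, Fintype.card_fin]
  · rw [hF, ← range_symmDiff_image]
    exact congrArg Set.range (funext hgv)

/-- If the graph on a family `F` of subsets of a finite set `V`, with two sets adjacent
iff their symmetric difference has exactly one element, is isomorphic to the hypercube
`Q_t`, then `F` is an interval `{R : S ⊆ R ⊆ T}` with `|T \ S| = t` in the subset poset. -/
theorem interval_of_iso_hypercube {V : Type*} [Fintype V] [DecidableEq V]
    (F : Set (Finset V)) (t : ℕ)
    (h : Nonempty (tarGraph (· ∈ F) ≃g hypercube t)) :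
    ∃ S T : Finset V, S ⊆ T ∧ (T \ S).card = t ∧
      F = {R : Finset V | S ⊆ R ∧ R ⊆ T} :=
  interval_of_iso_hypercube_general F t h
end

section
/- Let V be a finite type and let P be a superset-closed predicate on finite subsets of V. Let k be an integer such that every minimal P-set of V has cardinality strictly less than k. If the k-th TAR graph TAR_k(P) (the induced subgraph of the P-TAR graph on P-sets of cardinality at most k) is connected, then TAR_{k'}(P) is connected for every integer k' ≥ k. -/
/-- The `k`-TAR graph: the induced subgraph of the TAR graph of `P` on the
`P`-sets of cardinality at most `k`. -/
def tarGraphLe {V : Type*} [DecidableEq V] (P : Finset V → Prop) (k : ℕ) :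
    SimpleGraph {S : Finset V // P S ∧ S.card ≤ k} where
  Adj S T := (symmDiff S.1 T.1).card = 1
  symm := by constructor; intro S T h; rwa [symmDiff_comm]
  loopless := by constructor; intro S h; simp [symmDiff_self] at h

/-! Every `P`-set of size `n + 1 ≥ k` strictly contains a minimal `P`-set, so by superset-closure
it is adjacent in `TAR_{n+1}(P)` to a `P`-set of size `n`. Hence every vertex of `TAR_{n+1}(P)`
is joined to the image of `TAR_n(P)`, and connectivity climbs from `k` to every `k' ≥ k`. -/

theorem SimpleGraph.Connected.of_hom_of_forall_reachable {α β : Type*} {G : SimpleGraph α}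
    {H : SimpleGraph β} (f : G →g H) (hG : G.Connected)
    (hf : ∀ v, ∃ u, H.Reachable v (f u)) : H.Connected := by
  have : Nonempty β := hG.nonempty.map f
  refine ⟨fun v w => ?_⟩
  obtain ⟨u, hvu⟩ := hf v
  obtain ⟨u', hwu'⟩ := hf w
  exact hvu.trans (((hG.preconnected u u').map f).trans hwu'.symm)

theorem Finset.card_symmDiff_erase {α : Type*} [DecidableEq α] {s : Finset α} {a : α}
    (ha : a ∈ s) : (symmDiff s (s.erase a)).card = 1 := by
  rw [symmDiff_of_ge (s.erase_subset a), Finset.sdiff_erase_self ha, Finset.card_singleton]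

theorem exists_isMinimalPSet_subset {V : Type*} {P : Finset V → Prop} {S : Finset V}
    (hS : P S) : ∃ M ⊆ S, IsMinimalPSet P M := by
  obtain ⟨M, hMS, hM⟩ := exists_minimal_le_of_wellFoundedLT P S hS
  exact ⟨M, hMS, hM.prop, fun T hTM hT => hTM.not_subset (hM.le_of_le hT hTM.subset)⟩

theorem exists_mem_erase_of_le_card {V : Type*} [DecidableEq V] {P : Finset V → Prop}
    (hP : ∀ S T : Finset V, P S → S ⊆ T → P T) {k : ℕ}
    (hmin : ∀ S : Finset V, IsMinimalPSet P S → S.card < k) {S : Finset V} (hS : P S)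
    (hkS : k ≤ S.card) : ∃ v ∈ S, P (S.erase v) := by
  obtain ⟨M, hMS, hM⟩ := exists_isMinimalPSet_subset hS
  have hMS' : M ⊂ S := hMS.ssubset_of_ne (by
    rintro rfl
    exact (hmin M hM).not_ge hkS)
  obtain ⟨v, hvS, hvM⟩ := Finset.exists_of_ssubset hMS'
  exact ⟨v, hvS, hP M _ hM.1 (Finset.subset_erase.mpr ⟨hMS, hvM⟩)⟩

def tarGraphLe.castLE {V : Type*} [DecidableEq V] (P : Finset V → Prop) {m n : ℕ}
    (h : m ≤ n) : tarGraphLe P m →g tarGraphLe P n where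
  toFun S := ⟨S.1, S.2.1, S.2.2.trans h⟩
  map_rel' hST := hST

theorem tarGraphLe_succ_connected {V : Type*} [DecidableEq V] {P : Finset V → Prop}
    (hP : ∀ S T : Finset V, P S → S ⊆ T → P T) {k n : ℕ}
    (hmin : ∀ S : Finset V, IsMinimalPSet P S → S.card < k) (hkn : k ≤ n)
    (hconn : (tarGraphLe P n).Connected) : (tarGraphLe P (n + 1)).Connected := by
  refine hconn.of_hom_of_forall_reachable (tarGraphLe.castLE P n.le_succ) ?_
  rintro ⟨S, hS, hSn⟩
  rcases Nat.lt_or_ge S.card (n + 1) with hlt | hge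
  · exact ⟨⟨S, hS, Nat.lt_succ_iff.mp hlt⟩, .refl _⟩
  · obtain ⟨v, hvS, hSv⟩ :=
      exists_mem_erase_of_le_card hP hmin hS ((hkn.trans n.le_succ).trans hge)
    have hcard : (S.erase v).card ≤ n := by
      rw [Finset.card_erase_of_mem hvS]
      omega
    have hadj : (tarGraphLe P (n + 1)).Adj ⟨S, hS, hSn⟩
        ⟨S.erase v, hSv, hcard.trans n.le_succ⟩ :=
      Finset.card_symmDiff_erase hvS
    exact ⟨⟨S.erase v, hSv, hcard⟩, hadj.reachable⟩

theorem tarGraphLe_connected_of_connected_general {V : Type*} [DecidableEq V]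
    (P : Finset V → Prop)
    (hP : ∀ S T : Finset V, P S → S ⊆ T → P T)
    (k : ℕ)
    (hmin : ∀ S : Finset V, IsMinimalPSet P S → S.card < k)
    (hconn : (tarGraphLe P k).Connected) :
    ∀ k' : ℕ, k ≤ k' → (tarGraphLe P k').Connected := by
  intro k' hk'
  induction k', hk' using Nat.le_induction with
  | base => exact hconn
  | succ n hkn ih => exact tarGraphLe_succ_connected hP hmin hkn ih

/-- Let `P` be superset-closed and `k` an integer such that every minimal `P`-set has
cardinality strictly less than `k`. If `TAR_k(P)` is connected, then `TAR_{k'}(P)` is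
connected for every `k' ≥ k`. -/
theorem tarGraphLe_connected_of_connected {V : Type*} [Fintype V] [DecidableEq V]
    (P : Finset V → Prop)
    (hP : ∀ S T : Finset V, P S → S ⊆ T → P T)
    (k : ℕ)
    (hmin : ∀ S : Finset V, IsMinimalPSet P S → S.card < k)
    (hconn : (tarGraphLe P k).Connected) :
    ∀ k' : ℕ, k ≤ k' → (tarGraphLe P k').Connected :=
  tarGraphLe_connected_of_connected_general P hP k hmin hconn
end

section
/- Let G be a simple graph on n ≥ 2 vertices with no isolated vertices. If the zero forcing TAR graph of G is isomorphic to the zero forcing TAR graph of the path P_n, then G is isomorphic to P_n. -/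
/-- A set `B` is forcing-closed in `G` if no vertex of `B` has exactly one neighbor
outside `B` (i.e. no force can be performed from `B`). The zero forcing closure of `S`
is the smallest forcing-closed set containing `S`. -/
def ZFClosed {V : Type*} (G : SimpleGraph V) (B : Finset V) : Prop :=
  ∀ v ∈ B, ¬ ∃! w : V, G.Adj v w ∧ w ∉ B

/-- `S` is a zero forcing set of `G`: the zero forcing closure of `S` is all of `V`,
equivalently every forcing-closed set containing `S` is all of `V`. -/
def IsZeroForcingSet {V : Type*} [Fintype V] (G : SimpleGraph V) (S : Finset V) : Prop :=
  ∀ B : Finset V, S ⊆ B → ZFClosed G B → B = Finset.univ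

/-! In the TAR graph of an upward-closed family of sets, the distance between two members is the
size of their symmetric difference, so graph homomorphisms between such TAR graphs do not
increase it. In `Z-TAR(P_n)` every vertex `A` has the vertex `Aᶜ ∪ {0}` at distance at least
`n - 1`; pulling this back along the isomorphism from the image of `V(G)` gives a zero forcing
set `S` of `G` with `n - |S| ≥ n - 1`, i.e. a single vertex forcing `G`. The order in which one
token forces the whole graph lists its vertices so that each is adjacent exactly to its
predecessor and its successor, so `G` is a path. -/

open Finset SimpleGraph

lemma Finset.card_sub_one_le_card_symmDiff_insert_compl {α : Type*} [Fintype α] [DecidableEq α]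
    (a : α) (s : Finset α) : Fintype.card α - 1 ≤ #(symmDiff (insert a sᶜ) s) := by
  calc Fintype.card α - 1 = #(univ.erase a) := by rw [card_erase_of_mem (mem_univ a), card_univ]
    _ ≤ #(symmDiff (insert a sᶜ) s) := card_le_card fun x hx => by
      by_cases x ∈ s <;> simp_all [mem_symmDiff]

section TarGraph

variable {V : Type*} [DecidableEq V] {P : Finset V → Prop}

lemma tarGraph_adj {S T : {S : Finset V // P S}} :
    (tarGraph P).Adj S T ↔ #(symmDiff S.1 T.1) = 1 := Iff.rfl

lemma card_symmDiff_le_length {S T : {S : Finset V // P S}} (w : (tarGraph P).Walk S T) :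
    #(symmDiff S.1 T.1) ≤ w.length := by
  induction w with
  | nil => simp
  | @cons S T U hST _ ih =>
    calc #(symmDiff S.1 U.1) ≤ #(symmDiff S.1 T.1 ∪ symmDiff T.1 U.1) :=
          card_le_card (symmDiff_triangle _ _ _)
      _ ≤ #(symmDiff S.1 T.1) + #(symmDiff T.1 U.1) := card_union_le _ _
      _ ≤ _ := by rw [Walk.length_cons, tarGraph_adj.mp hST]; omega

lemma exists_walk_length_eq_card_sdiff (hP : Monotone P) {S T : {S : Finset V // P S}}
    (hST : S.1 ⊆ T.1) : ∃ w : (tarGraph P).Walk S T, w.length = #(T.1 \ S.1) := by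
  obtain ⟨T, hT⟩ := T
  induction hk : #(T \ S.1) generalizing T with
  | zero =>
    obtain rfl : S = ⟨T, hT⟩ := Subtype.ext (hST.antisymm (by simpa using hk))
    exact ⟨Walk.nil, rfl⟩
  | succ k ih =>
    obtain ⟨x, hx⟩ : (T \ S.1).Nonempty := by rw [← card_pos]; omega
    have hS : S.1 ⊆ T.erase x := subset_erase.mpr ⟨hST, (mem_sdiff.mp hx).2⟩
    obtain ⟨w, hw⟩ := ih (T.erase x) (hP hS S.2) hS
      (by rw [erase_sdiff_comm, card_erase_of_mem hx, hk]; rfl)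
    have hadj : (tarGraph P).Adj ⟨T.erase x, hP hS S.2⟩ ⟨T, hT⟩ := by
      rw [tarGraph_adj, symmDiff_of_le (erase_subset x T), sdiff_erase_self (mem_sdiff.mp hx).1]
      simp
    exact ⟨w.concat hadj, by rw [Walk.length_concat, hw]⟩

lemma exists_walk_length_eq_card_symmDiff (hP : Monotone P) (S T : {S : Finset V // P S}) :
    ∃ w : (tarGraph P).Walk S T, w.length = #(symmDiff S.1 T.1) := by
  let U : {S : Finset V // P S} := ⟨S.1 ∪ T.1, hP subset_union_left S.2⟩
  obtain ⟨w₁, hw₁⟩ := exists_walk_length_eq_card_sdiff hP (T := U) subset_union_left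
  obtain ⟨w₂, hw₂⟩ :=
    exists_walk_length_eq_card_sdiff hP (S := T) (T := U) subset_union_right
  refine ⟨w₁.append w₂.reverse, ?_⟩
  rw [Walk.length_append, Walk.length_reverse, hw₁, hw₂, symmDiff_def, sup_eq_union,
    card_union_of_disjoint disjoint_sdiff_sdiff, union_sdiff_left, union_sdiff_right, add_comm]

lemma card_symmDiff_map_le {V' : Type*} [DecidableEq V'] {Q : Finset V' → Prop}
    (hP : Monotone P) (φ : tarGraph P →g tarGraph Q) (S T : {S : Finset V // P S}) :
    #(symmDiff (φ S).1 (φ T).1) ≤ #(symmDiff S.1 T.1) := by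
  obtain ⟨w, hw⟩ := exists_walk_length_eq_card_symmDiff hP S T
  simpa [hw] using card_symmDiff_le_length (w.map φ)

end TarGraph

section ZeroForcing

variable {V : Type*} [Fintype V] {G : SimpleGraph V}

lemma isZeroForcingSet_monotone : Monotone (IsZeroForcingSet G) :=
  fun _ _ hST hS B hTB hB => hS B (hST.trans hTB) hB

lemma isZeroForcingSet_univ : IsZeroForcingSet G univ :=
  fun _ hB _ => univ_subset_iff.mp hB

lemma IsZeroForcingSet.nonempty [Nonempty V] {S : Finset V} (hS : IsZeroForcingSet G S) :
    S.Nonempty := by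
  rw [nonempty_iff_ne_empty]
  rintro rfl
  exact univ_nonempty.ne_empty (hS ∅ subset_rfl (by simp [ZFClosed])).symm

lemma isZeroForcingSet_pathGraph_zero {n : ℕ} (hn : 0 < n) :
    IsZeroForcingSet (pathGraph n) {⟨0, hn⟩} := by
  intro B hB hcl
  suffices ∀ i (hi : i < n), (⟨i, hi⟩ : Fin n) ∈ B from
    eq_univ_of_forall fun i => this i i.2
  intro i
  induction i using Nat.strong_induction_on with
  | _ i ih =>
    intro hi
    rcases i with _ | j
    · exact hB (mem_singleton_self _)
    · by_contra hiB
      -- `j + 1` would be the only neighbor of `j` outside `B`: `j - 1` is already in `B`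
      refine hcl ⟨j, by omega⟩ (ih j (by omega) _)
        ⟨⟨j + 1, hi⟩, ⟨by simp [pathGraph_adj], hiB⟩, ?_⟩
      rintro w ⟨hw, hwB⟩
      rw [pathGraph_adj] at hw
      rcases hw with hw | hw
      · exact Fin.ext hw.symm
      · exact absurd (ih w (by simp at hw; omega) w.2) hwB

end ZeroForcing

section ForcingChain

variable {V : Type*} {G : SimpleGraph V}

/-- The vertices of `l` in the order in which a single token forces them: each vertex other
than the last one has all its neighbours among its predecessors and its successor. -/
structure IsForcingChain (G : SimpleGraph V) (l : List V) : Prop where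
  nodup : l.Nodup
  isChain : l.IsChain G.Adj
  adj_mem_take : ∀ i (hi : i + 1 < l.length) w, G.Adj l[i] w → w ∈ l.take (i + 2)

namespace IsForcingChain

variable {l : List V}

lemma singleton (v : V) : IsForcingChain G [v] :=
  ⟨List.nodup_singleton v, List.isChain_singleton v, fun i hi => by simp at hi⟩

lemma adj_getElem_iff (hl : IsForcingChain G l) {i j : ℕ} (hi : i < l.length)
    (hj : j < l.length) : G.Adj l[i] l[j] ↔ i + 1 = j ∨ j + 1 = i := by
  have far {i j : ℕ} (hi : i < l.length) (hj : j < l.length) (hij : i + 2 ≤ j) :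
      ¬ G.Adj l[i] l[j] := fun hadj => by
    obtain ⟨k, hk, hkj⟩ := List.mem_take_iff_getElem.mp (hl.adj_mem_take i (by omega) _ hadj)
    have := (hl.nodup.getElem_inj_iff).mp hkj
    omega
  constructor
  · intro hadj
    by_contra hne
    rcases lt_trichotomy i j with hij | rfl | hij
    · exact far hi hj (by omega) hadj
    · exact G.irrefl hadj
    · exact far hj hi (by omega) hadj.symm
  · rintro (rfl | rfl)
    · exact hl.isChain.getElem i hj
    · exact (hl.isChain.getElem j hi).symm

lemma eq_getLast_of_adj (hl : IsForcingChain G l) {x u : V} (hx : x ∈ l) (hu : u ∉ l)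
    (hxu : G.Adj x u) : x = l.getLast (List.ne_nil_of_mem hx) := by
  obtain ⟨i, hi, rfl⟩ := List.mem_iff_getElem.mp hx
  rw [List.getLast_eq_getElem]
  congr
  by_contra hne
  exact hu (List.mem_of_mem_take (hl.adj_mem_take i (by omega) u hxu))

lemma append (hl : IsForcingChain G l) {x u : V} (hx : x ∈ l) (hu : u ∉ l)
    (hxu : G.Adj x u) (huniq : ∀ w, G.Adj x w → w ∉ l → w = u) :
    IsForcingChain G (l ++ [u]) := by
  have hlast := hl.eq_getLast_of_adj hx hu hxu
  refine ⟨hl.nodup.append (List.nodup_singleton u) (by simpa using hu), ?_, ?_⟩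
  · refine List.isChain_append.mpr ⟨hl.isChain, List.isChain_singleton u, ?_⟩
    simp [List.getLast?_eq_some_getLast (List.ne_nil_of_mem hx), ← hlast, hxu]
  · intro i hi w hw
    simp only [List.length_append, List.length_singleton] at hi
    rw [List.getElem_append_left (by omega)] at hw
    rcases Nat.lt_or_ge (i + 1) l.length with hil | hil
    · rw [List.take_append_of_le_length (by omega)]
      exact hl.adj_mem_take i hil w hw
    · have hlen : (l ++ [u]).length ≤ i + 2 := by
        simp only [List.length_append, List.length_singleton]; omega
      rw [List.take_of_length_le hlen, List.mem_append, List.mem_singleton]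
      have : l[i] = x := by rw [hlast, List.getLast_eq_getElem]; congr; omega
      rw [this] at hw
      by_cases hwl : w ∈ l
      · exact Or.inl hwl
      · exact Or.inr (huniq w hw hwl)

end IsForcingChain

end ForcingChain

section PathGraph

variable {V : Type*} [Fintype V] [DecidableEq V] {G : SimpleGraph V}

lemma IsForcingChain.exists_forall_mem {l : List V} (hl : IsForcingChain G l)
    (hS : IsZeroForcingSet G l.toFinset) : ∃ l', IsForcingChain G l' ∧ ∀ w, w ∈ l' := by
  by_cases hcl : ZFClosed G l.toFinset
  · exact ⟨l, hl, fun w => by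
      rw [← List.mem_toFinset, hS _ subset_rfl hcl]; exact mem_univ w⟩
  · simp only [ZFClosed, not_forall, not_not, List.mem_toFinset] at hcl
    obtain ⟨x, hx, u, ⟨hxu, hu⟩, huniq⟩ := hcl
    have hl' := hl.append hx hu hxu fun w hw hwl => huniq w ⟨hw, hwl⟩
    have : (l ++ [u]).length ≤ Fintype.card V := hl'.nodup.length_le_card
    exact hl'.exists_forall_mem
      (isZeroForcingSet_monotone (by simp [List.toFinset_append]) hS)
termination_by Fintype.card V - l.length
decreasing_by simp only [List.length_append, List.length_singleton] at this ⊢; omega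

lemma IsForcingChain.nonempty_iso_pathGraph {l : List V} (hl : IsForcingChain G l)
    (hall : ∀ w, w ∈ l) : Nonempty (G ≃g pathGraph (Fintype.card V)) := by
  let e := hl.nodup.getEquivOfForallMemList l hall
  rw [← Fintype.card_congr e, Fintype.card_fin]
  exact ⟨Iso.symm ⟨e, fun {i j} => by simp [e, hl.adj_getElem_iff, pathGraph_adj]⟩⟩

lemma nonempty_iso_pathGraph_of_isZeroForcingSet_singleton {v : V}
    (hv : IsZeroForcingSet G {v}) : Nonempty (G ≃g pathGraph (Fintype.card V)) := by
  obtain ⟨l, hl, hall⟩ := (IsForcingChain.singleton v).exists_forall_mem (by simpa using hv)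
  exact hl.nonempty_iso_pathGraph hall

end PathGraph

theorem eq_path_of_zTar_iso_path_general {W : Type*} [Fintype W] [DecidableEq W]
    (G : SimpleGraph W) (n : ℕ) (hn : 2 ≤ n) (hcard : Fintype.card W = n)
    (h : Nonempty
      (tarGraph (IsZeroForcingSet G)
        ≃g tarGraph (IsZeroForcingSet (SimpleGraph.pathGraph n)))) :
    Nonempty (G ≃g SimpleGraph.pathGraph n) := by
  obtain ⟨φ⟩ := h
  have : Nonempty W := Fintype.card_pos_iff.mp (by omega)
  let A := φ ⟨univ, isZeroForcingSet_univ⟩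
  let T : {S // IsZeroForcingSet (pathGraph n) S} := ⟨insert ⟨0, by omega⟩ A.1ᶜ,
    isZeroForcingSet_monotone (by simp) (isZeroForcingSet_pathGraph_zero (by omega))⟩
  let S := φ.symm T
  have hS : n - 1 ≤ n - #S.1 := calc
    n - 1 ≤ #(symmDiff T.1 A.1) := by
      simpa using card_sub_one_le_card_symmDiff_insert_compl _ A.1
    _ = #(symmDiff (φ S).1 A.1) := by rw [show φ S = T from φ.apply_symm_apply T]
    _ ≤ #(symmDiff S.1 univ) := card_symmDiff_map_le isZeroForcingSet_monotone φ.toHom _ _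
    _ = n - #S.1 := by rw [← top_eq_univ, symmDiff_top, hnot_eq_compl, card_compl, hcard]
  obtain ⟨v, hv⟩ := (card_eq_one (s := S.1)).mp <| by
    have := S.2.nonempty.card_pos
    have := hcard ▸ card_le_univ S.1
    omega
  exact hcard ▸ nonempty_iso_pathGraph_of_isZeroForcingSet_singleton (hv ▸ S.2)

/-- If `G` is a graph on `n ≥ 2` vertices with no isolated vertices whose zero forcing
TAR graph is isomorphic to that of the path `P_n`, then `G ≅ P_n`. -/
theorem eq_path_of_zTar_iso_path {W : Type*} [Fintype W] [DecidableEq W]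
    (G : SimpleGraph W) (n : ℕ) (hn : 2 ≤ n) (hcard : Fintype.card W = n)
    (hnoiso : ∀ v : W, ∃ w : W, G.Adj v w)
    (h : Nonempty
      (tarGraph (IsZeroForcingSet G)
        ≃g tarGraph (IsZeroForcingSet (SimpleGraph.pathGraph n)))) :
    Nonempty (G ≃g SimpleGraph.pathGraph n) :=
  eq_path_of_zTar_iso_path_general G n hn hcard h
end
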